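/- arXiv:1705.09282 — 2 statements merged into one kernel-verified Lean document; each statement's English description precedes it below -/
import Mathlib

section
/- Let V, Q be finite-dimensional inner product spaces, A : V → V a linear map that is coercive (⟨Av, v⟩ ≥ α‖v‖² for some α > 0 and all v), and B : V → Q linear. Then the saddle-point operator K(v, q) = (Av − B*q, Bv) on V × Q is injective on the subspace {(v,q) : q ∈ range(B)}; in particular, if B is surjective, K is invertible. -/
/-!
If `K (v, q) = 0` then `A v = B* q` and `B v = 0`, so `⟪A v, v⟫ = ⟪q, B v⟫ = 0` and coercivity
forces `v = 0`. Then `B* q = 0`, i.e. `q ∈ (range B)ᗮ`; together with `q ∈ range B` this gives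
`q = 0`. Since `K` is linear, this is injectivity on `V × range B`, and when `B` is surjective
an injective endomorphism of the finite-dimensional space `V × Q` is bijective.
-/

open scoped RealInnerProductSpace

lemma inner_map_self_pos_of_coercive {V : Type*} [NormedAddCommGroup V] [InnerProductSpace ℝ V]
    {A : V →ₗ[ℝ] V} {α : ℝ} (hα : 0 < α)
    (hcoer : ∀ v : V, α * ‖v‖ ^ 2 ≤ ⟪A v, v⟫) {v : V} (hv : v ≠ 0) : 0 < ⟪A v, v⟫ :=
  (mul_pos hα (pow_pos (norm_pos_iff.mpr hv) 2)).trans_le (hcoer v)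

section SaddlePoint

variable {V Q : Type*}
    [NormedAddCommGroup V] [InnerProductSpace ℝ V] [FiniteDimensional ℝ V]
    [NormedAddCommGroup Q] [InnerProductSpace ℝ Q] [FiniteDimensional ℝ Q]

lemma LinearMap.eq_zero_of_mem_range_of_adjoint_eq_zero {B : V →ₗ[ℝ] Q} {q : Q}
    (hq : q ∈ LinearMap.range B) (h : LinearMap.adjoint B q = 0) : q = 0 :=
  Submodule.disjoint_def.mp (LinearMap.range B).orthogonal_disjoint q hq
    (by rwa [LinearMap.orthogonal_range, LinearMap.mem_ker])

noncomputable def saddlePointMap (A : V →ₗ[ℝ] V) (B : V →ₗ[ℝ] Q) : V × Q →ₗ[ℝ] V × Q :=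
  (A ∘ₗ LinearMap.fst ℝ V Q - LinearMap.adjoint B ∘ₗ LinearMap.snd ℝ V Q).prod
    (B ∘ₗ LinearMap.fst ℝ V Q)

@[simp]
lemma saddlePointMap_apply (A : V →ₗ[ℝ] V) (B : V →ₗ[ℝ] Q) (vq : V × Q) :
    saddlePointMap A B vq = (A vq.1 - LinearMap.adjoint B vq.2, B vq.1) :=
  rfl

variable {A : V →ₗ[ℝ] V} {B : V →ₗ[ℝ] Q}

lemma eq_zero_of_saddlePointMap_eq_zero (hA : ∀ v : V, v ≠ 0 → 0 < ⟪A v, v⟫) {v : V} {q : Q}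
    (hq : q ∈ LinearMap.range B) (h : saddlePointMap A B (v, q) = 0) : v = 0 ∧ q = 0 := by
  simp only [saddlePointMap_apply, Prod.mk_eq_zero, sub_eq_zero] at h
  obtain ⟨hAv, hBv⟩ := h
  have hv : v = 0 := by
    by_contra hv
    have : ⟪A v, v⟫ = 0 := by
      rw [hAv, LinearMap.adjoint_inner_left, hBv, inner_zero_right]
    exact (hA v hv).ne' this
  refine ⟨hv, B.eq_zero_of_mem_range_of_adjoint_eq_zero hq ?_⟩
  rw [← hAv, hv, map_zero]

lemma saddlePointMap_injOn (hA : ∀ v : V, v ≠ 0 → 0 < ⟪A v, v⟫) :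
    Set.InjOn (saddlePointMap A B) {vq | vq.2 ∈ LinearMap.range B} := by
  intro x hx y hy hxy
  have hdiff := eq_zero_of_saddlePointMap_eq_zero hA (v := x.1 - y.1) (sub_mem hx hy)
    (by rw [← Prod.fst_sub, ← Prod.snd_sub, Prod.mk.eta, map_sub, hxy, sub_self])
  exact Prod.ext (sub_eq_zero.mp hdiff.1) (sub_eq_zero.mp hdiff.2)

lemma saddlePointMap_bijective (hA : ∀ v : V, v ≠ 0 → 0 < ⟪A v, v⟫)
    (hB : Function.Surjective B) : Function.Bijective (saddlePointMap A B) := by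
  have hrange (q : Q) : q ∈ LinearMap.range B := LinearMap.mem_range.mpr (hB q)
  have hinj : Function.Injective (saddlePointMap A B) := fun x y =>
    saddlePointMap_injOn hA (hrange x.2) (hrange y.2)
  exact ⟨hinj, LinearMap.injective_iff_surjective.mp hinj⟩

end SaddlePoint

/-- The saddle-point operator `K(v,q) = (Av − B*q, Bv)` with `A` coercive is injective on
the subspace `{(v,q) : q ∈ range B}`; if moreover `B` is surjective, `K` is bijective. -/
theorem stmt10 {V Q : Type*}
    [NormedAddCommGroup V] [InnerProductSpace ℝ V] [FiniteDimensional ℝ V]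
    [NormedAddCommGroup Q] [InnerProductSpace ℝ Q] [FiniteDimensional ℝ Q]
    (A : V →ₗ[ℝ] V) (α : ℝ) (hα : 0 < α)
    (hcoer : ∀ v : V, α * ‖v‖ ^ 2 ≤ ⟪A v, v⟫)
    (B : V →ₗ[ℝ] Q)
    (K : V × Q → V × Q)
    (hK : ∀ vq : V × Q, K vq = (A vq.1 - (LinearMap.adjoint B) vq.2, B vq.1)) :
    (∀ v₁ q₁ v₂ q₂, q₁ ∈ LinearMap.range B → q₂ ∈ LinearMap.range B →
        K (v₁, q₁) = K (v₂, q₂) → (v₁, q₁) = (v₂, q₂)) ∧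
      (Function.Surjective B → Function.Bijective K) := by
  have hA : ∀ v : V, v ≠ 0 → 0 < ⟪A v, v⟫ := fun _ =>
    inner_map_self_pos_of_coercive hα hcoer
  obtain rfl : K = saddlePointMap A B := funext hK
  exact ⟨fun _ _ _ _ hq₁ hq₂ h => saddlePointMap_injOn hA hq₁ hq₂ h,
    saddlePointMap_bijective hA⟩
end

section
/- Let V_i ⊆ V and Q_i ⊆ Q be finite-dimensional subspaces with div(V_i) = Q_i, where div : V → Q is linear. Suppose (δu, δp) ∈ V_i × Q_i solves the local mixed problem a(v, δu) − b(v, δp) + b(δu, q) = ℓ(v) − a(v, u) + b(v, p) − b(u, q) for all (v, q) ∈ V_i × Q_i, where b(v, q) = ⟨div v, q⟩ and the current iterate u satisfies div u = 0. Then div δu = 0, and hence div(u + δu) = 0. -/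
open scoped RealInnerProductSpace

/-- Test the local problem with `v = 0`. -/
theorem inner_dvg_add_eq_zero_of_local_mixed {V Q : Type*} [AddCommGroup V] [Module ℝ V]
    [NormedAddCommGroup Q] [InnerProductSpace ℝ Q] (dvg : V →ₗ[ℝ] Q)
    (a : V →ₗ[ℝ] V →ₗ[ℝ] ℝ) (ℓ : V →ₗ[ℝ] ℝ) (b : V → Q → ℝ) (hb : ∀ v q, b v q = ⟪dvg v, q⟫)
    (Vi : Submodule ℝ V) (Qi : Set Q) (u δu : V) (p δp : Q)
    (hlocal : ∀ v ∈ Vi, ∀ q ∈ Qi, a v δu - b v δp + b δu q = ℓ v - a v u + b v p - b u q)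
    {q : Q} (hq : q ∈ Qi) : ⟪dvg (u + δu), q⟫ = 0 := by
  have h := hlocal 0 Vi.zero_mem q hq
  simp only [hb, map_zero, LinearMap.zero_apply, inner_zero_left] at h
  rw [map_add, inner_add_left]
  linarith

theorem stmt14_general {V Q : Type*} [NormedAddCommGroup V] [InnerProductSpace ℝ V]
    [NormedAddCommGroup Q] [InnerProductSpace ℝ Q]
    (dvg : V →ₗ[ℝ] Q)
    (a : V →ₗ[ℝ] V →ₗ[ℝ] ℝ) (ℓ : V →ₗ[ℝ] ℝ)
    (b : V → Q → ℝ) (hb : ∀ v q, b v q = ⟪dvg v, q⟫)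
    (Vi : Submodule ℝ V) (Qi : Submodule ℝ Q)
    (hVQ : Vi.map dvg = Qi)
    (u : V) (p : Q) (hu : dvg u = 0)
    (δu : V) (δp : Q) (hδu : δu ∈ Vi)
    (hlocal : ∀ v ∈ Vi, ∀ q ∈ Qi,
      a v δu - b v δp + b δu q = ℓ v - a v u + b v p - b u q) :
    dvg δu = 0 ∧ dvg (u + δu) = 0 := by
  have hdvg : dvg (u + δu) = dvg δu := by rw [map_add, hu, zero_add]
  have horth : dvg δu ∈ Qiᗮ := fun q hq => by
    rw [real_inner_comm, ← hdvg]
    exact inner_dvg_add_eq_zero_of_local_mixed dvg a ℓ b hb Vi Qi u δu p δp hlocal hq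
  have hmem : dvg δu ∈ Qi := hVQ ▸ Submodule.mem_map_of_mem hδu
  have hzero : dvg δu = 0 := (Submodule.mem_bot ℝ).mp (Qi.inf_orthogonal_eq_bot ▸ ⟨hmem, horth⟩)
  exact ⟨hzero, hdvg.trans hzero⟩

/-- Divergence preservation of the Schwarz smoother on a compatible subdomain, in
variational form.  If `div(V_i) = Q_i`, the current iterate `u` is divergence-free, and
`(δu, δp) ∈ V_i × Q_i` solves the local mixed problem, then `div δu = 0` and hence
`div (u + δu) = 0`. -/
theorem stmt14 {V Q : Type*} [NormedAddCommGroup V] [InnerProductSpace ℝ V]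
    [NormedAddCommGroup Q] [InnerProductSpace ℝ Q]
    (dvg : V →ₗ[ℝ] Q)
    (a : V →ₗ[ℝ] V →ₗ[ℝ] ℝ) (ℓ : V →ₗ[ℝ] ℝ)
    (b : V → Q → ℝ) (hb : ∀ v q, b v q = ⟪dvg v, q⟫)
    (Vi : Submodule ℝ V) (Qi : Submodule ℝ Q)
    (hVQ : Vi.map dvg = Qi)
    (hVfin : FiniteDimensional ℝ Vi) (hQfin : FiniteDimensional ℝ Qi)
    (u : V) (p : Q) (hu : dvg u = 0)
    (δu : V) (δp : Q) (hδu : δu ∈ Vi) (hδp : δp ∈ Qi)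
    (hlocal : ∀ v ∈ Vi, ∀ q ∈ Qi,
      a v δu - b v δp + b δu q = ℓ v - a v u + b v p - b u q) :
    dvg δu = 0 ∧ dvg (u + δu) = 0 :=
  stmt14_general dvg a ℓ b hb Vi Qi hVQ u p hu δu δp hδu hlocal
end
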